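/- arXiv:1910.14595 — 3 statements merged into one kernel-verified Lean document; each statement's English description precedes it below -/
import Mathlib

section
/- Let X be a quasi-compact scheme, D a Cartier divisor on X and E an effective Cartier divisor on X. If the restriction of D to the open subset X \ |E| is effective, then there exists a natural number n₀ ≥ 1 such that D + n·E is effective for every n ≥ n₀. -/
open AlgebraicGeometry CategoryTheory Opposite

noncomputable section

/-- Data presenting a Cartier divisor on a scheme `X`: an open cover together with,
on each member of the cover, a "rational function" written as a quotient `num / den` of
sections whose germs are nonzerodivisors, such that on overlaps the two rational functions
differ by a unit of the local ring at each point. -/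
structure CartierDivisorData (X : Scheme) where
  ι : Type
  U : ι → X.Opens
  covers : ∀ x : X, ∃ i, x ∈ U i
  num : ∀ i, Γ(X, U i)
  den : ∀ i, Γ(X, U i)
  num_reg : ∀ i (x : X) (hx : x ∈ U i),
    X.presheaf.germ (U i) x hx (num i) ∈ nonZeroDivisors (X.presheaf.stalk x)
  den_reg : ∀ i (x : X) (hx : x ∈ U i),
    X.presheaf.germ (U i) x hx (den i) ∈ nonZeroDivisors (X.presheaf.stalk x)
  compat : ∀ i j (x : X) (hi : x ∈ U i) (hj : x ∈ U j),
    ∃ u : (X.presheaf.stalk x)ˣ,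
      X.presheaf.germ (U i) x hi (num i) * X.presheaf.germ (U j) x hj (den j) =
        u * (X.presheaf.germ (U j) x hj (num j) * X.presheaf.germ (U i) x hi (den i))

namespace CartierDivisorData

variable {X : Scheme}

/-- A Cartier divisor is effective at a point `x` if its local equation at `x` lies in the
local ring, i.e. the denominator divides the numerator in the stalk at `x`. -/
def EffectiveAt (D : CartierDivisorData X) (x : X) : Prop :=
  ∀ i (hi : x ∈ D.U i), ∃ c : X.presheaf.stalk x,
    X.presheaf.germ (D.U i) x hi (D.num i) = c * X.presheaf.germ (D.U i) x hi (D.den i)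

/-- A Cartier divisor is effective if it is so at every point. -/
def Effective (D : CartierDivisorData X) : Prop := ∀ x : X, D.EffectiveAt x

/-- `D + n • E` is effective at `x`:  with `D = a/b` and `E = e/d` locally, this says
`a eⁿ` is divisible by `b dⁿ` in the stalk at `x`. -/
def AddSmulEffectiveAt (D E : CartierDivisorData X) (n : ℕ) (x : X) : Prop :=
  ∀ i j (hi : x ∈ D.U i) (hj : x ∈ E.U j),
    ∃ c : X.presheaf.stalk x,
      X.presheaf.germ (D.U i) x hi (D.num i) * (X.presheaf.germ (E.U j) x hj (E.num j)) ^ n =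
        c * (X.presheaf.germ (D.U i) x hi (D.den i) *
          (X.presheaf.germ (E.U j) x hj (E.den j)) ^ n)

/-- The support of an (effective) Cartier divisor: the points at which its local equation is
not a unit times the denominator, i.e. does not cut out the trivial divisor. -/
def support (E : CartierDivisorData X) : Set X :=
  {x | ∀ i (hi : x ∈ E.U i), ¬ ∃ u : (X.presheaf.stalk x)ˣ,
    X.presheaf.germ (E.U i) x hi (E.num i) =
      (u : X.presheaf.stalk x) * X.presheaf.germ (E.U i) x hi (E.den i)}

end CartierDivisorData

/-! On an affine open `W` on which `D = a / b` and `E = e / d`, effectivity of `E` gives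
`e = s * d` in `Γ(X, W)`, and `W \ |E|` is the locus where `s` is invertible.  Effectivity of
`D` there puts `s` in the radical of the colon ideal `((b) : (a))`, so `b ∣ sᵐ * a` and hence
`b * dⁿ ∣ a * eⁿ` for `n ≥ m`.  Quasi-compactness lets finitely many such opens cover `X`. -/

open Filter Topology

theorem IsLocalization.exists_mem_dvd_mul_of_algebraMap_dvd {R S : Type*} [CommSemiring R]
    [CommSemiring S] [Algebra R S] {M : Submonoid R} (hM : IsLocalization M S) {a b : R}
    (h : algebraMap R S b ∣ algebraMap R S a) : ∃ m ∈ M, b ∣ m * a := by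
  obtain ⟨c, hc⟩ := h
  obtain ⟨⟨r, t⟩, rfl⟩ := IsLocalization.mk'_surjective M c
  have heq : algebraMap R S (t * a) = algebraMap R S (b * r) := by
    rw [map_mul, hc, map_mul, ← IsLocalization.mk'_spec S r t]
    ring
  obtain ⟨u, hu⟩ := IsLocalization.exists_of_eq (M := M) heq
  exact ⟨u * t, M.mul_mem u.2 t.2, ⟨u * r, by rw [mul_assoc, hu]; ring⟩⟩

namespace AlgebraicGeometry.IsAffineOpen

variable {X : Scheme} {W : X.Opens}

theorem exists_dvd_pow_mul_of_dvd_germ (hW : IsAffineOpen W) {a b s : Γ(X, W)}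
    (h : ∀ y (hy : y ∈ W), IsUnit (X.presheaf.germ W y hy s) →
      X.presheaf.germ W y hy b ∣ X.presheaf.germ W y hy a) :
    ∃ m : ℕ, b ∣ s ^ m * a := by
  suffices s ∈ ((Ideal.span {b}).colon (Ideal.span {a})).radical by
    obtain ⟨m, hm⟩ := this
    exact ⟨m, Ideal.mem_span_singleton.mp (Ideal.mem_colon_span_singleton.mp hm)⟩
  rw [Ideal.radical_eq_sInf, Ideal.mem_sInf]
  rintro p ⟨hcolon, hp⟩
  by_contra hsp
  obtain ⟨q, rfl⟩ : ∃ q : PrimeSpectrum Γ(X, W), q.asIdeal = p := ⟨⟨p, hp⟩, rfl⟩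
  have hq : hW.fromSpec.base q ∈ W := hW.range_fromSpec.le ⟨q, rfl⟩
  let := X.presheaf.algebra_section_stalk ⟨_, hq⟩
  have hloc := hW.isLocalization_stalk' q hq
  have hs : IsUnit (X.presheaf.germ W _ hq s) := hloc.map_units _ ⟨s, hsp⟩
  obtain ⟨r, hr, hdvd⟩ :=
    hloc.exists_mem_dvd_mul_of_algebraMap_dvd (M := q.asIdeal.primeCompl) (h _ hq hs)
  exact hr (hcolon (Ideal.mem_colon_span_singleton.mpr (Ideal.mem_span_singleton.mpr hdvd)))

theorem dvd_of_dvd_germ (hW : IsAffineOpen W) {a b : Γ(X, W)}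
    (h : ∀ y (hy : y ∈ W), X.presheaf.germ W y hy b ∣ X.presheaf.germ W y hy a) : b ∣ a := by
  simpa using hW.exists_dvd_pow_mul_of_dvd_germ (s := 1) fun y hy _ ↦ h y hy

end AlgebraicGeometry.IsAffineOpen

theorem dvd_mul_pow_of_mul_eq_unit_mul {R : Type*} [CommRing R] {a b a' b' e d e' d' : R}
    {u v : Rˣ} (n : ℕ) (ha : a' * b = u * (a * b')) (he : e' * d = v * (e * d'))
    (hreg : b * d ^ n ∈ nonZeroDivisors R) (h : b * d ^ n ∣ a * e ^ n) :
    b' * d' ^ n ∣ a' * e' ^ n := by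
  obtain ⟨c, hc⟩ := h
  refine ⟨u * v ^ n * c, (mul_cancel_right_mem_nonZeroDivisors hreg).mp ?_⟩
  have hen : e' ^ n * d ^ n = v ^ n * (e ^ n * d' ^ n) := by
    rw [← mul_pow, he, mul_pow, mul_pow]
  linear_combination (e' ^ n * d ^ n) * ha + (u * a * b') * hen + (u * v ^ n * b' * d' ^ n) * hc

theorem IsCompact.eventually_forall_of_forall_exists_nhds {ι X : Type*} [TopologicalSpace X]
    {l : Filter ι} {K : Set X} (hK : IsCompact K) {P : ι → X → Prop}
    (h : ∀ x ∈ K, ∃ t ∈ 𝓝 x, ∀ᶠ n in l, ∀ y ∈ t, P n y) : ∀ᶠ n in l, ∀ y ∈ K, P n y := by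
  refine hK.induction_on (p := fun s ↦ ∀ᶠ n in l, ∀ y ∈ s, P n y) (by simp)
    (fun s t hst ht ↦ ht.mono fun n hn y hy ↦ hn y (hst hy))
    (fun s t hs ht ↦ (hs.and ht).mono fun n hn y hy ↦ hy.elim (hn.1 y) (hn.2 y))
    fun x hx ↦ ?_
  obtain ⟨t, ht, hP⟩ := h x hx
  exact ⟨t, mem_nhdsWithin_of_mem_nhds ht, hP⟩

namespace CartierDivisorData

variable {X : Scheme}

theorem addSmulEffectiveAt_of_dvd (D E : CartierDivisorData X) {x : X} {i : D.ι} {j : E.ι}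
    (hi : x ∈ D.U i) (hj : x ∈ E.U j) {n : ℕ}
    (h : X.presheaf.germ (D.U i) x hi (D.den i) * X.presheaf.germ (E.U j) x hj (E.den j) ^ n ∣
      X.presheaf.germ (D.U i) x hi (D.num i) * X.presheaf.germ (E.U j) x hj (E.num j) ^ n) :
    D.AddSmulEffectiveAt E n x := by
  intro i' j' hi' hj'
  obtain ⟨u, hu⟩ := D.compat i' i x hi' hi
  obtain ⟨v, hv⟩ := E.compat j' j x hj' hj
  rw [← dvd_iff_exists_eq_mul_left]
  exact dvd_mul_pow_of_mul_eq_unit_mul n hu hv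
    (mul_mem (D.den_reg i x hi) (pow_mem (E.den_reg j x hj) n)) h

theorem exists_mem_nhds_eventually_addSmulEffectiveAt (D E : CartierDivisorData X)
    (hE : E.Effective) (hres : ∀ x : X, x ∉ E.support → D.EffectiveAt x) (x : X) :
    ∃ t ∈ 𝓝 x, ∀ᶠ n in atTop, ∀ y ∈ t, D.AddSmulEffectiveAt E n y := by
  obtain ⟨i, hi⟩ := D.covers x
  obtain ⟨j, hj⟩ := E.covers x
  obtain ⟨W, hW, hxW, hWle⟩ :=
    TopologicalSpace.Opens.isBasis_iff_nbhd.mp X.isBasis_affineOpens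
      (show x ∈ D.U i ⊓ E.U j from ⟨hi, hj⟩)
  have hWD : W ≤ D.U i := hWle.trans inf_le_left
  have hWE : W ≤ E.U j := hWle.trans inf_le_right
  let a := X.presheaf.map (homOfLE hWD).op (D.num i)
  let b := X.presheaf.map (homOfLE hWD).op (D.den i)
  let e := X.presheaf.map (homOfLE hWE).op (E.num j)
  let d := X.presheaf.map (homOfLE hWE).op (E.den j)
  obtain ⟨s, hs⟩ : d ∣ e := hW.dvd_of_dvd_germ fun y hy ↦ by
    simpa [a, b, e, d, dvd_iff_exists_eq_mul_left] using hE y j (hWE hy)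
  obtain ⟨m, hm⟩ : ∃ m, b ∣ s ^ m * a := hW.exists_dvd_pow_mul_of_dvd_germ fun y hy hsy ↦ by
    have hy' : y ∉ E.support := fun hsupp ↦ hsupp j (hWE hy) ⟨hsy.unit, by
      simpa [e, d, mul_comm] using congrArg (X.presheaf.germ W y hy) hs⟩
    simpa [a, b, dvd_iff_exists_eq_mul_left] using hres y hy' i (hWD hy)
  refine ⟨W, W.isOpen.mem_nhds hxW, eventually_atTop.mpr ⟨m, fun n hn y hy ↦ ?_⟩⟩
  obtain ⟨k, rfl⟩ := Nat.exists_eq_add_of_le hn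
  have hdvd : b * d ^ (m + k) ∣ a * e ^ (m + k) := by
    rw [show a * e ^ (m + k) = s ^ m * a * d ^ (m + k) * s ^ k by rw [hs]; ring]
    exact dvd_mul_of_dvd_left (mul_dvd_mul_right hm _) _
  apply D.addSmulEffectiveAt_of_dvd E (hWD hy) (hWE hy)
  simpa [a, b, e, d] using map_dvd (X.presheaf.germ W y hy).hom hdvd

end CartierDivisorData

/-- **(Miyazaki, Lem. 3.14.)** Let `X` be a quasi-compact scheme, `D` a Cartier divisor on `X`
and `E` an effective Cartier divisor on `X`.  If the restriction of `D` to the open subset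
`X \ |E|` is effective, then there is `n₀ ≥ 1` such that `D + n·E` is effective for all
`n ≥ n₀`. -/
theorem exists_add_smul_effective {X : Scheme} [CompactSpace X]
    (D E : CartierDivisorData X) (hE : E.Effective)
    (hres : ∀ x : X, x ∉ E.support → D.EffectiveAt x) :
    ∃ n₀ : ℕ, 1 ≤ n₀ ∧ ∀ n, n₀ ≤ n → ∀ x : X, D.AddSmulEffectiveAt E n x := by
  have h := isCompact_univ.eventually_forall_of_forall_exists_nhds (l := atTop)
    fun x _ ↦ D.exists_mem_nhds_eventually_addSmulEffectiveAt E hE hres x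
  obtain ⟨N, hN⟩ := eventually_atTop.mp h
  exact ⟨max N 1, le_max_right _ _, fun n hn x ↦ hN n (le_of_max_le_left hn) x trivial⟩

end
end

section
/- Let f : X → Y be a separated morphism of schemes and U ⊆ X an open dense subset. If the image f(U) is open in Y and the induced morphism U → f(U) is proper, then f⁻¹(f(U)) = U. -/
/-!
Put `V = f(U)`. The morphism `U ⟶ V` factors as `U ⟶ f⁻¹(V) ⟶ V`, and the second map is separated,
so the open inclusion `U ⟶ f⁻¹(V)` is universally closed. Its image `U` is then closed in
`f⁻¹(V)`, and also dense there since `U` is dense in `X`; hence `U = f⁻¹(V)`.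
-/

open AlgebraicGeometry CategoryTheory

namespace AlgebraicGeometry.Scheme

lemma le_of_universallyClosed_homOfLE {X : Scheme} {U V : X.Opens} (e : U ≤ V)
    [UniversallyClosed (X.homOfLE e)] (hU : Dense (U : Set X)) : V ≤ U := by
  have hrange : Set.range (X.homOfLE e) = (V.ι ⁻¹ᵁ U : Set V) :=
    congrArg SetLike.coe (X.opensRange_homOfLE e)
  have hclosed : IsClosed (Set.range (X.homOfLE e)) :=
    (X.homOfLE e).isClosedMap.isClosed_range
  have hdense : Dense (Set.range (X.homOfLE e)) :=
    hrange ▸ hU.preimage V.isOpen.isOpenMap_subtype_val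
  intro x hx
  have hmem : (⟨x, hx⟩ : V) ∈ Set.range (X.homOfLE e) := by
    rw [← hclosed.closure_eq, hdense.closure_eq]
    trivial
  rw [hrange] at hmem
  exact hmem

end AlgebraicGeometry.Scheme

/-- **(KMSY, Lem. 1.3.7.)** Let `f : X ⟶ Y` be a separated morphism of schemes, and `U ⊆ X`
an open dense subset.  If the image `f(U)` is open in `Y` and the induced morphism
`U ⟶ f(U)` is proper (e.g. an isomorphism), then `f⁻¹(f(U)) = U`. -/
theorem preimage_image_eq_of_proper_restriction {X Y : Scheme} (f : X ⟶ Y) [IsSeparated f]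
    (U : X.Opens) (hdense : Dense (U : Set X))
    (himg : IsOpen (f.base '' (U : Set X)))
    (hle : U ≤ f ⁻¹ᵁ ⟨f.base '' (U : Set X), himg⟩)
    (hproper : IsProper (f.resLE ⟨f.base '' (U : Set X), himg⟩ U hle)) :
    f.base ⁻¹' (f.base '' (U : Set X)) = (U : Set X) := by
  set V : Y.Opens := ⟨f.base '' (U : Set X), himg⟩
  have : UniversallyClosed (X.homOfLE hle ≫ f.resLE V (f ⁻¹ᵁ V) le_rfl) := by
    rw [Scheme.Hom.map_resLE]
    infer_instance
  have : UniversallyClosed (X.homOfLE hle) := .of_comp_of_isSeparated _ (f.resLE V _ le_rfl)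
  exact le_antisymm (Scheme.le_of_universallyClosed_homOfLE hle hdense) hle
end

section
/- Let C and D be sites whose topologies are generated by cd-structures P_C and P_D, and let u : C → D be a functor. Assume (1) P_D is complete, and (2) for every X' ∈ C and every distinguished square Q ∈ P_D with Q(11) = u(X'), there exists a distinguished square Q' ∈ P_C with u(Q') = Q and Q'(11) = X'. Then u is cocontinuous: for every X' ∈ C and every covering family {V_i → u(X')} in D, there is a covering family {U_j → X'} in C such that {u(U_j) → u(X')} refines {V_i → u(X')}. -/
open CategoryTheory Limits

universe u v

variable {C : Type u} [Category.{v} C]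

/-- A commutative square in a category `C`, with lower-right corner `X`, used as the datum of a
distinguished square of a cd-structure. -/
structure CDSquare (C : Type u) [Category.{v} C] where
  W : C
  Y : C
  A : C
  X : C
  t : W ⟶ Y
  l : W ⟶ A
  p : Y ⟶ X
  e : A ⟶ X
  comm : t ≫ p = l ≫ e

/-- The elementary cover `{p : Y ⟶ X, e : A ⟶ X}` associated to a distinguished square. -/
def CDSquare.elemPresieve (Q : CDSquare C) : Presieve Q.X :=
  Presieve.ofArrows (fun b : Bool => bif b then Q.Y else Q.A)
    (fun b => Bool.rec (motive := fun b => (bif b then Q.Y else Q.A) ⟶ Q.X) Q.e Q.p b)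

/-- The Grothendieck topology generated by a cd-structure `P`: the smallest topology in which
the elementary covers of all distinguished squares are covering. -/
def cdTopology (P : Set (CDSquare C)) : GrothendieckTopology C :=
  sInf {J | ∀ Q ∈ P, Sieve.generate Q.elemPresieve ∈ J Q.X}

/-- Simple covers with respect to a cd-structure: generated inductively from isomorphisms by
composing along distinguished squares. -/
inductive IsSimpleCover (P : Set (CDSquare C)) : (X : C) → Presieve X → Prop
  | of_iso {X Y : C} (f : Y ⟶ X) (hf : IsIso f) : IsSimpleCover P X (Presieve.singleton f)
  | comp (Q : CDSquare C) (hQ : Q ∈ P) {Ry : Presieve Q.Y} {Ra : Presieve Q.A}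
      (hy : IsSimpleCover P Q.Y Ry) (ha : IsSimpleCover P Q.A Ra) :
      IsSimpleCover P Q.X
        (fun _ g => (∃ h, Ry h ∧ g = h ≫ Q.p) ∨ (∃ h, Ra h ∧ g = h ≫ Q.e))

/-- A cd-structure is complete if every covering sieve of the associated topology can be
refined by a simple cover. -/
def IsCompleteCD (P : Set (CDSquare C)) : Prop :=
  ∀ (X : C) (S : Sieve X), S ∈ cdTopology P X →
    ∃ R : Presieve X, IsSimpleCover P X R ∧ ∀ ⦃Z : C⦄ (g : Z ⟶ X), R g → S g

/-- The image of a square under a functor. -/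
def CDSquare.map {C D : Type u} [Category.{v} C] [Category.{v} D]
    (u : C ⥤ D) (Q : CDSquare C) : CDSquare D where
  W := u.obj Q.W
  Y := u.obj Q.Y
  A := u.obj Q.A
  X := u.obj Q.X
  t := u.map Q.t
  l := u.map Q.l
  p := u.map Q.p
  e := u.map Q.e
  comm := by rw [← u.map_comp, ← u.map_comp, Q.comm]

/-! A covering sieve `S` of `u(X')` contains a simple cover, by completeness of `P_D`; induct on
it. An isomorphism in `S` forces `S = ⊤`. A distinguished square over `u(X')` lifts to one over
`X'`, and the pullback of `S` to `X'` covers because `cdTopology` is local along elementary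
covers and, by induction, that pullback covers on both legs of the lifted square. -/

section

variable {C D : Type u} [Category.{v} C] [Category.{v} D]

lemma CDSquare.generate_elemPresieve_mem_cdTopology {P : Set (CDSquare C)} {Q : CDSquare C}
    (hQ : Q ∈ P) : Sieve.generate Q.elemPresieve ∈ cdTopology P Q.X :=
  (GrothendieckTopology.mem_sInf _ _).2 fun _ hJ => hJ Q hQ

lemma CDSquare.mem_cdTopology_of_pullback_mem {P : Set (CDSquare C)} {Q : CDSquare C}
    (hQ : Q ∈ P) {S : Sieve Q.X} (hp : S.pullback Q.p ∈ cdTopology P Q.Y)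
    (he : S.pullback Q.e ∈ cdTopology P Q.A) : S ∈ cdTopology P Q.X := by
  refine (cdTopology P).transitive (generate_elemPresieve_mem_cdTopology hQ) S ?_
  rintro Z _ ⟨W, a, b, ⟨i⟩, rfl⟩
  rw [Sieve.pullback_comp]
  apply (cdTopology P).pullback_stable
  cases i
  exacts [he, hp]

lemma IsSimpleCover.functorPullback_mem_cdTopology {P_C : Set (CDSquare C)}
    {P_D : Set (CDSquare D)} {u : C ⥤ D}
    (hlift : ∀ (X' : C) (Q : CDSquare D), Q ∈ P_D → Q.X = u.obj X' →
      ∃ Q' ∈ P_C, Q'.X = X' ∧ Q'.map u = Q)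
    {X : D} {R : Presieve X} (hR : IsSimpleCover P_D X R) {X' : C} (h : u.obj X' = X)
    {S : Sieve X} (hRS : R ≤ S.arrows) :
    (S.pullback (eqToHom h)).functorPullback u ∈ cdTopology P_C X' := by
  induction hR generalizing X' with
  | of_iso f hf =>
    have hS : S = ⊤ :=
      S.id_mem_iff_eq_top.1 (by simpa using S.downward_closed (hRS _ f ⟨⟩) (inv f))
    subst hS
    simp
  | @comp Q hQ Ry Ra _ _ ihY ihA =>
    obtain ⟨Q', hQ', rfl, rfl⟩ := hlift X' Q hQ h.symm
    dsimp only [CDSquare.map] at S h hRS ihY ihA ⊢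
    rw [eqToHom_refl, Sieve.pullback_id]
    refine CDSquare.mem_cdTopology_of_pullback_mem hQ' ?_ ?_
    · simpa [Sieve.functorPullback_pullback] using
        ihY rfl (S := S.pullback (u.map Q'.p)) fun _ g hg => hRS _ _ (Or.inl ⟨g, hg, rfl⟩)
    · simpa [Sieve.functorPullback_pullback] using
        ihA rfl (S := S.pullback (u.map Q'.e)) fun _ g hg => hRS _ _ (Or.inr ⟨g, hg, rfl⟩)

end

/-- **(Lemma on cocontinuity for cd-structures.)**  Let `C`, `D` be sites whose topologies are
generated by cd-structures `P_C` and `P_D` and let `u : C ⥤ D`.  Assume (1) `P_D` is complete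
and (2) every distinguished square of `P_D` whose lower-right corner is of the form `u(X')`
lifts to a distinguished square of `P_C` with lower-right corner `X'`.  Then `u` is
cocontinuous: every covering family of `u(X')` in `D` is refined by the image of a covering
family of `X'` in `C`. -/
theorem cocontinuous_of_cd_lifting {C D : Type u} [Category.{v} C] [Category.{v} D]
    (P_C : Set (CDSquare C)) (P_D : Set (CDSquare D)) (u : C ⥤ D)
    (hD : IsCompleteCD P_D)
    (hlift : ∀ (X' : C) (Q : CDSquare D), Q ∈ P_D → Q.X = u.obj X' →
      ∃ Q' ∈ P_C, Q'.X = X' ∧ Q'.map u = Q) :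
    u.IsCocontinuous (cdTopology P_C) (cdTopology P_D) := by
  refine ⟨fun {X'} S hS => ?_⟩
  obtain ⟨R, hR, hRS⟩ := hD _ S hS
  simpa using hR.functorPullback_mem_cdTopology hlift rfl hRS
end
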